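/- Matrix cohomological equation: let B be a real n×n matrix whose eigenvalues μ_j satisfy μ_j/μ_l ≠ exp(±i⟨κ,ρ⟩) for all j,l and all nonzero κ ∈ ℤ^d. Then for every matrix-valued trigonometric polynomial R̃ on 𝕋^d with zero average there exists a unique matrix-valued trigonometric polynomial H with zero average such that H(θ+ρ)B − B·H(θ) = R̃(θ) for all θ. -/

import Mathlib

open Complex

/-- A matrix-valued trigonometric polynomial on `𝕋^d` with zero average
(no constant term): `H(θ) = Σ_{κ≠0} H_κ^{(c)} cos⟨κ,θ⟩ + H_κ^{(s)} sin⟨κ,θ⟩`. -/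
noncomputable def matTrigPoly {d n : ℕ} (S : Finset (Fin d → ℕ))
    (c s : (Fin d → ℕ) → Matrix (Fin n) (Fin n) ℝ) (θ : Fin d → ℝ) :
    Matrix (Fin n) (Fin n) ℝ :=
  ∑ κ ∈ S.erase 0,
    (Real.cos (∑ i, (κ i : ℝ) * θ i) • c κ + Real.sin (∑ i, (κ i : ℝ) * θ i) • s κ)

/-!
Writing `H` through its cosine and sine coefficients, the shift `θ ↦ θ + ρ` rotates each
coefficient pair `(H_κ^c, H_κ^s)` by the angle `ω = ⟨κ, ρ⟩`; since the functions `cos⟨κ,θ⟩`,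
`sin⟨κ,θ⟩` (`κ ∈ ℕ^d \ 0`) are linearly independent (they are combinations of the distinct
characters `e^{± i⟨κ,θ⟩}`), the equation is equivalent to one linear equation
`(H_κ^c, H_κ^s) ↦ (R_κ^c, R_κ^s)` per frequency. Each of these linear maps is injective, hence
bijective: for a kernel element `(X, Y)`, the complex matrix `X + iY` intertwines `B` and
`e^{-iω} B`, whose spectra are disjoint by the eigenvalue condition, so `X + iY = 0` by
Sylvester's theorem.
-/

theorem spectrum.disjoint_smul_of_div_ne {K A : Type*} [Field K] [Ring A] [Algebra K A]
    {a : A} (ha : IsUnit a) {z : K} (hz : z ≠ 0)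
    (h : ∀ μ ∈ spectrum K a, ∀ ν ∈ spectrum K a, μ / ν ≠ z) :
    Disjoint (spectrum K a) (spectrum K (z • a)) := by
  rw [Set.disjoint_left]
  intro μ hμ hμz
  rw [← Units.val_mk0 hz, ← Units.smul_def, spectrum.unit_smul_eq_smul] at hμz
  obtain ⟨ν, hν, rfl⟩ := hμz
  have hν0 : ν ≠ 0 := fun h0 => spectrum.zero_notMem K ha (h0 ▸ hν)
  exact h _ hμ ν hν (by simp [hν0])

namespace Matrix

open Polynomial

section Sylvester

variable {K m n : Type*} [Field K] [Fintype m] [Fintype n] [DecidableEq m] [DecidableEq n]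

theorem aeval_mul_eq_mul_aeval_of_mul_eq_mul {A : Matrix m m K} {B : Matrix n n K}
    {M : Matrix m n K} (h : A * M = M * B) (p : K[X]) : aeval A p * M = M * aeval B p := by
  induction p using Polynomial.induction_on' with
  | add p q hp hq => rw [map_add, map_add, Matrix.add_mul, Matrix.mul_add, hp, hq]
  | monomial k c =>
    have hpow : A ^ k * M = M * B ^ k := by
      induction k with
      | zero => simp
      | succ k ih =>
        rw [pow_succ, pow_succ, Matrix.mul_assoc, h, ← Matrix.mul_assoc, ih, Matrix.mul_assoc]
    rw [aeval_monomial, aeval_monomial, ← Algebra.smul_def, ← Algebra.smul_def, Matrix.smul_mul,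
      Matrix.mul_smul, hpow]

theorem eq_zero_of_mul_eq_mul_of_disjoint_spectrum [IsAlgClosed K] {A : Matrix m m K}
    {B : Matrix n n K} {M : Matrix m n K} (hAB : Disjoint (spectrum K A) (spectrum K B))
    (h : A * M = M * B) : M = 0 := by
  rcases isEmpty_or_nonempty n with hn | hn
  · exact Subsingleton.elim _ _
  have hunit : IsUnit (aeval A B.charpoly) := by
    rw [← spectrum.zero_notMem_iff K, spectrum.map_polynomial_aeval_of_degree_pos _ _
      (by rw [charpoly_degree_eq_dim]; exact_mod_cast Fintype.card_pos)]
    rintro ⟨k, hkA, hk⟩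
    exact hAB.notMem_of_mem_left hkA (mem_spectrum_of_isRoot_charpoly hk)
  have hzero := aeval_mul_eq_mul_aeval_of_mul_eq_mul h B.charpoly
  rw [aeval_self_charpoly, Matrix.mul_zero] at hzero
  rw [← nonsing_inv_mul_cancel_left (A := aeval A B.charpoly) M
    ((isUnit_iff_isUnit_det _).1 hunit), hzero, Matrix.mul_zero]

end Sylvester

section RotSylvester

variable {ι : Type*} [Fintype ι] [DecidableEq ι]

/-- With `(X, Y) = (H_κ^c, H_κ^s)` and `ω = ⟨κ, ρ⟩` this is the left-hand side of the pair of
Sylvester-type equations for the `κ`-th coefficients. -/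
noncomputable def rotSylvester (B : Matrix ι ι ℝ) (ω : ℝ) :
    (Matrix ι ι ℝ × Matrix ι ι ℝ) →ₗ[ℝ] Matrix ι ι ℝ × Matrix ι ι ℝ where
  toFun P := ((Real.cos ω • P.1 + Real.sin ω • P.2) * B - B * P.1,
    (Real.cos ω • P.2 - Real.sin ω • P.1) * B - B * P.2)
  map_add' P Q := by
    ext : 1 <;>
    · simp only [Prod.fst_add, Prod.snd_add, smul_add, Matrix.add_mul, Matrix.sub_mul,
        Matrix.mul_add]
      abel
  map_smul' r P := by
    ext : 1 <;>
    · simp only [Prod.smul_fst, Prod.smul_snd, RingHom.id_apply, Matrix.add_mul, Matrix.sub_mul,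
        Matrix.smul_mul, Matrix.mul_smul]
      module

lemma mul_complexify_of_rotSylvester_eq_zero {B X Y : Matrix ι ι ℝ} {ω : ℝ}
    (h : rotSylvester B ω (X, Y) = 0) :
    B.map ofReal * (X.map ofReal + I • Y.map ofReal)
      = (X.map ofReal + I • Y.map ofReal) * (exp (-(ω * I)) • B.map ofReal) := by
  set Bc := B.map ofReal
  set Xc := X.map ofReal
  set Yc := Y.map ofReal
  have hmap (c : ℝ) (M : Matrix ι ι ℝ) : ofRealHom.mapMatrix (c • M) = (c : ℂ) • M.map ofReal := by
    ext; simp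
  have hX : Bc * Xc = ((Real.cos ω : ℂ) • Xc + (Real.sin ω : ℂ) • Yc) * Bc := by
    have hfst := congrArg ofRealHom.mapMatrix (sub_eq_zero.1 (congrArg Prod.fst h))
    simp only [map_mul, map_add, hmap] at hfst
    exact hfst.symm
  have hY : Bc * Yc = ((Real.cos ω : ℂ) • Yc - (Real.sin ω : ℂ) • Xc) * Bc := by
    have hsnd := congrArg ofRealHom.mapMatrix (sub_eq_zero.1 (congrArg Prod.snd h))
    simp only [map_mul, map_sub, hmap] at hsnd
    exact hsnd.symm
  have hz : exp (-(ω * I)) = Real.cos ω - Real.sin ω * I := by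
    rw [← neg_mul, exp_mul_I, cos_neg, sin_neg, ofReal_cos, ofReal_sin]; ring
  rw [Matrix.mul_add, Matrix.mul_smul, hX, hY, hz]
  simp only [Matrix.add_mul, Matrix.sub_mul, Matrix.smul_mul, Matrix.mul_smul, smul_add, smul_sub]
  linear_combination (norm := module) ((Real.sin ω : ℂ) * I_sq) • (Yc * Bc)

theorem rotSylvester_bijective {B : Matrix ι ι ℝ} (hB : IsUnit B) {ω : ℝ}
    (h : ∀ μ ∈ spectrum ℂ (B.map ofReal), ∀ ν ∈ spectrum ℂ (B.map ofReal),
      μ / ν ≠ exp (-(ω * I))) :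
    Function.Bijective (rotSylvester B ω) := by
  have hinj : Function.Injective (rotSylvester B ω) := by
    rw [← LinearMap.ker_eq_bot, LinearMap.ker_eq_bot']
    rintro ⟨X, Y⟩ hXY
    have hM := eq_zero_of_mul_eq_mul_of_disjoint_spectrum
      (spectrum.disjoint_smul_of_div_ne (hB.map ofRealHom.mapMatrix) (exp_ne_zero _) h)
      (mul_complexify_of_rotSylvester_eq_zero hXY)
    have hXY (i j : ι) : X i j = 0 ∧ Y i j = 0 := by
      simpa [Complex.ext_iff] using congrFun₂ hM i j
    exact Prod.ext (ext fun i j => (hXY i j).1) (ext fun i j => (hXY i j).2)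
  exact ⟨hinj, LinearMap.injective_iff_surjective.1 hinj⟩

end RotSylvester

end Matrix

section TrigIndependence

variable {d : ℕ}

noncomputable def torusChar (κ : Fin d → ℤ) : AddChar (Fin d → ℝ) ℂ where
  toFun θ := exp ((∑ i, (κ i : ℝ) * θ i : ℝ) * I)
  map_zero_eq_one' := by simp
  map_add_eq_mul' θ θ' := by
    simp only [Pi.add_apply, mul_add, Finset.sum_add_distrib, ofReal_add, add_mul, exp_add]

lemma torusChar_apply (κ : Fin d → ℤ) (θ : Fin d → ℝ) :
    torusChar κ θ = exp ((∑ i, (κ i : ℝ) * θ i : ℝ) * I) := rfl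

lemma torusChar_single (κ : Fin d → ℤ) (j : Fin d) (t : ℝ) :
    torusChar κ (Pi.single j t) = exp ((κ j * t : ℝ) * I) := by
  simp [torusChar_apply, Pi.single_apply]

lemma eq_zero_of_forall_exp_mul_I_eq_one {m : ℝ} (h : ∀ t : ℝ, exp ((m * t : ℝ) * I) = 1) :
    m = 0 := by
  by_contra hm
  have hπ := h (Real.pi / m)
  rw [mul_div_cancel₀ _ hm, exp_pi_mul_I] at hπ
  norm_num at hπ

lemma torusChar_injective : Function.Injective (torusChar (d := d)) := by
  intro κ κ' h
  funext j
  have hj : ((κ j - κ' j : ℤ) : ℝ) = 0 := eq_zero_of_forall_exp_mul_I_eq_one fun t => by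
    rw [Int.cast_sub, sub_mul, ofReal_sub, sub_mul, exp_sub, ← torusChar_single,
      ← torusChar_single, h, torusChar_single, div_self (exp_ne_zero _)]
  exact sub_eq_zero.1 (Int.cast_eq_zero.1 hj)

lemma linearIndependent_torusChar :
    LinearIndependent ℂ (fun κ : Fin d → ℤ => (torusChar κ : (Fin d → ℝ) → ℂ)) :=
  ((linearIndependent_monoidHom (Multiplicative (Fin d → ℝ)) ℂ).comp _
    (AddChar.toMonoidHomEquiv.injective.comp torusChar_injective)).map'
    (LinearEquiv.funCongrLeft ℂ ℂ Multiplicative.ofAdd).toLinearMap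
    (LinearEquiv.ker _)

lemma ofReal_cos_mul_add_sin_mul (x a b : ℝ) :
    ((Real.cos x * a + Real.sin x * b : ℝ) : ℂ)
      = (a - b * I) / 2 * exp (x * I) + (a + b * I) / 2 * exp (-(x * I)) := by
  rw [← neg_mul, exp_mul_I, exp_mul_I, cos_neg, sin_neg]
  push_cast
  linear_combination ((b : ℂ) * sin x) * I_sq

theorem eq_zero_of_forall_sum_cos_mul_add_sin_mul_eq_zero {T : Finset (Fin d → ℕ)}
    (hT : 0 ∉ T) {a b : (Fin d → ℕ) → ℝ}
    (h : ∀ θ : Fin d → ℝ, ∑ κ ∈ T,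
      (Real.cos (∑ i, (κ i : ℝ) * θ i) * a κ + Real.sin (∑ i, (κ i : ℝ) * θ i) * b κ) = 0)
    {κ : Fin d → ℕ} (hκ : κ ∈ T) : a κ = 0 ∧ b κ = 0 := by
  let N : T ⊕ T → (Fin d → ℤ) :=
    Sum.elim (fun κ => ((↑) : ℕ → ℤ) ∘ κ.1) (fun κ => -(((↑) : ℕ → ℤ) ∘ κ.1))
  -- The frequencies `κ` and `-κ'` never coincide: both have natural entries and `0 ∉ T`.
  have hN : Function.Injective N := by
    have hzero {κ κ' : Fin d → ℕ} (he : ((↑) ∘ κ : Fin d → ℤ) = -((↑) ∘ κ')) : κ = 0 :=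
      funext fun i => by
        have hi := congrFun he i
        simp only [Function.comp_apply, Pi.neg_apply] at hi
        simp only [Pi.zero_apply]
        omega
    rintro (⟨κ, hκ⟩ | ⟨κ, hκ⟩) (⟨κ', hκ'⟩ | ⟨κ', hκ'⟩) he <;>
      simp only [N, Sum.elim_inl, Sum.elim_inr] at he
    · exact congrArg _ (Subtype.ext (Nat.cast_injective.comp_left he))
    · exact absurd (hzero he ▸ hκ) hT
    · exact absurd (hzero he.symm ▸ hκ') hT
    · exact congrArg _ (Subtype.ext (Nat.cast_injective.comp_left (neg_inj.1 he)))
  let g : T ⊕ T → ℂ := Sum.elim (fun κ => (a κ - b κ * I) / 2) (fun κ => (a κ + b κ * I) / 2)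
  have hsum : ∑ i, g i • (torusChar (N i) : (Fin d → ℝ) → ℂ) = 0 := by
    funext θ
    simp only [Finset.sum_apply, Pi.smul_apply, smul_eq_mul, Pi.zero_apply]
    calc ∑ i, g i * torusChar (N i) θ
        = ∑ κ ∈ T, ((Real.cos (∑ i, (κ i : ℝ) * θ i) * a κ
            + Real.sin (∑ i, (κ i : ℝ) * θ i) * b κ : ℝ) : ℂ) := by
          rw [Fintype.sum_sum_type, ← Finset.sum_add_distrib, ← Finset.sum_coe_sort T]
          refine Fintype.sum_congr _ _ fun κ => ?_
          rw [ofReal_cos_mul_add_sin_mul]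
          simp [N, g, torusChar_apply, Finset.sum_neg_distrib]
      _ = 0 := by rw [← ofReal_sum, h θ, ofReal_zero]
  have hg := Fintype.linearIndependent_iff.1 (linearIndependent_torusChar.comp N hN) g hsum
  simpa [g, Complex.ext_iff] using hg (.inl ⟨κ, hκ⟩)

theorem eq_zero_of_forall_sum_cos_smul_add_sin_smul_eq_zero {V : Type*} [AddCommGroup V]
    [Module ℝ V] {T : Finset (Fin d → ℕ)} (hT : 0 ∉ T) {a b : (Fin d → ℕ) → V}
    (h : ∀ θ : Fin d → ℝ, ∑ κ ∈ T,
      (Real.cos (∑ i, (κ i : ℝ) * θ i) • a κ + Real.sin (∑ i, (κ i : ℝ) * θ i) • b κ) = 0)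
    {κ : Fin d → ℕ} (hκ : κ ∈ T) : a κ = 0 ∧ b κ = 0 := by
  have hdual (f : Module.Dual ℝ V) : f (a κ) = 0 ∧ f (b κ) = 0 :=
    eq_zero_of_forall_sum_cos_mul_add_sin_mul_eq_zero hT (a := f ∘ a) (b := f ∘ b)
      (fun θ => by simpa using congrArg f (h θ)) hκ
  exact ⟨(Module.forall_dual_apply_eq_zero_iff ℝ _).1 fun f => (hdual f).1,
    (Module.forall_dual_apply_eq_zero_iff ℝ _).1 fun f => (hdual f).2⟩

end TrigIndependence

section MatTrigPoly

variable {d n : ℕ}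

lemma matTrigPoly_sub (S : Finset (Fin d → ℕ))
    (c s c' s' : (Fin d → ℕ) → Matrix (Fin n) (Fin n) ℝ) (θ : Fin d → ℝ) :
    matTrigPoly S (c - c') (s - s') θ = matTrigPoly S c s θ - matTrigPoly S c' s' θ := by
  simp only [matTrigPoly, ← Finset.sum_sub_distrib, Pi.sub_apply, smul_sub]
  exact Finset.sum_congr rfl fun _ _ => by abel

theorem matTrigPoly_eq_iff {S : Finset (Fin d → ℕ)}
    {c s c' s' : (Fin d → ℕ) → Matrix (Fin n) (Fin n) ℝ} :
    (∀ θ, matTrigPoly S c s θ = matTrigPoly S c' s' θ) ↔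
      ∀ κ ∈ S.erase 0, c κ = c' κ ∧ s κ = s' κ := by
  refine ⟨fun h κ hκ => ?_, fun h θ =>
    Finset.sum_congr rfl fun κ hκ => by rw [(h κ hκ).1, (h κ hκ).2]⟩
  have hsub := eq_zero_of_forall_sum_cos_smul_add_sin_smul_eq_zero (Finset.notMem_erase 0 S)
    (a := c - c') (b := s - s') (fun θ => by rw [← matTrigPoly, matTrigPoly_sub, h, sub_self]) hκ
  exact ⟨sub_eq_zero.1 hsub.1, sub_eq_zero.1 hsub.2⟩

theorem matTrigPoly_add_mul_sub_mul (S : Finset (Fin d → ℕ))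
    (c s : (Fin d → ℕ) → Matrix (Fin n) (Fin n) ℝ) (B : Matrix (Fin n) (Fin n) ℝ)
    (ρ θ : Fin d → ℝ) :
    matTrigPoly S c s (θ + ρ) * B - B * matTrigPoly S c s θ
      = matTrigPoly S (fun κ => (B.rotSylvester (∑ i, (κ i : ℝ) * ρ i) (c κ, s κ)).1)
          (fun κ => (B.rotSylvester (∑ i, (κ i : ℝ) * ρ i) (c κ, s κ)).2) θ := by
  rw [matTrigPoly, matTrigPoly, Finset.sum_mul, Finset.mul_sum, ← Finset.sum_sub_distrib]
  refine Finset.sum_congr rfl fun κ _ => ?_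
  have hshift : ∑ i, (κ i : ℝ) * (θ + ρ) i = ∑ i, (κ i : ℝ) * θ i + ∑ i, (κ i : ℝ) * ρ i := by
    simp only [Pi.add_apply, mul_add, Finset.sum_add_distrib]
  rw [hshift, Real.cos_add, Real.sin_add]
  simp only [Matrix.rotSylvester, LinearMap.coe_mk, AddHom.coe_mk, Matrix.add_mul, Matrix.sub_mul,
    Matrix.smul_mul, Matrix.mul_add, Matrix.mul_smul, smul_add, smul_sub, smul_smul, sub_smul,
    add_smul]
  module

end MatTrigPoly

theorem Finset.forall_notMem_erase_iff {α : Type*} [DecidableEq α] {S : Finset α} {a : α}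
    {p : α → Prop} : (∀ x ∉ S.erase a, p x) ↔ (∀ x ∉ S, p x) ∧ p a := by
  refine ⟨fun h => ⟨fun x hx => h x (mt Finset.mem_of_mem_erase hx), h a (S.notMem_erase a)⟩,
    fun ⟨hS, ha⟩ x hx => ?_⟩
  by_cases hxa : x = a
  · exact hxa ▸ ha
  · exact hS x fun hxS => hx (Finset.mem_erase.2 ⟨hxa, hxS⟩)

theorem existsUnique_pi_prod_of_bijective {ι α β γ : Type*} [Zero α] [Zero β] {T : Set ι}
    {f : ι → α × β → γ} (hf : ∀ i ∈ T, Function.Bijective (f i)) (r : ι → γ) :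
    ∃! H : (ι → α) × (ι → β),
      (∀ i ∉ T, H.1 i = 0 ∧ H.2 i = 0) ∧ ∀ i ∈ T, f i (H.1 i, H.2 i) = r i := by
  have hex (i : ι) : ∃ p : α × β, (i ∉ T → p = 0) ∧ (i ∈ T → f i p = r i) := by
    by_cases hi : i ∈ T
    · obtain ⟨p, hp⟩ := (hf i hi).2 (r i)
      exact ⟨p, fun h => absurd hi h, fun _ => hp⟩
    · exact ⟨0, fun _ => rfl, fun h => absurd h hi⟩
  choose g hg using hex
  refine ⟨(fun i => (g i).1, fun i => (g i).2),
    ⟨fun i hi => Prod.ext_iff.1 ((hg i).1 hi), fun i hi => (hg i).2 hi⟩, ?_⟩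
  rintro H ⟨hout, hin⟩
  have hH (i : ι) : (H.1 i, H.2 i) = g i := by
    by_cases hi : i ∈ T
    · exact (hf i hi).1 ((hin i hi).trans ((hg i).2 hi).symm)
    · rw [(hg i).1 hi]
      exact Prod.ext (hout i hi).1 (hout i hi).2
  exact Prod.ext (funext fun i => congrArg Prod.fst (hH i))
    (funext fun i => congrArg Prod.snd (hH i))

/-- Matrix cohomological equation: if the (complex) eigenvalues of the
invertible real matrix `B` satisfy `μ/ν ≠ exp(± i⟨κ,ρ⟩)` for all nonzero
`κ ∈ ℤ^d`, then for every matrix-valued trigonometric polynomial `R̃` with zero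
average there exists a unique matrix-valued trigonometric polynomial `H` with
zero average such that `H(θ+ρ)·B − B·H(θ) = R̃(θ)` for all `θ`. -/
theorem matrix_cohomological_lemma {n d : ℕ}
    (B : Matrix (Fin n) (Fin n) ℝ) (ρ : Fin d → ℝ)
    (hB : IsUnit B)
    (heig : ∀ μ ∈ spectrum ℂ (B.map Complex.ofReal),
            ∀ ν ∈ spectrum ℂ (B.map Complex.ofReal),
            ∀ κ : Fin d → ℤ, κ ≠ 0 →
      μ / ν ≠ Complex.exp ((∑ i, (κ i : ℝ) * ρ i : ℝ) * Complex.I) ∧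
      μ / ν ≠ Complex.exp (-((∑ i, (κ i : ℝ) * ρ i : ℝ) * Complex.I)))
    (S : Finset (Fin d → ℕ))
    (Rc Rs : (Fin d → ℕ) → Matrix (Fin n) (Fin n) ℝ) :
    ∃! H : ((Fin d → ℕ) → Matrix (Fin n) (Fin n) ℝ)
            × ((Fin d → ℕ) → Matrix (Fin n) (Fin n) ℝ),
      ((∀ κ ∉ S, H.1 κ = 0 ∧ H.2 κ = 0) ∧ H.1 0 = 0 ∧ H.2 0 = 0) ∧
      ∀ θ : Fin d → ℝ,
        matTrigPoly S H.1 H.2 (θ + ρ) * B - B * matTrigPoly S H.1 H.2 θ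
          = matTrigPoly S Rc Rs θ := by
  set L : (Fin d → ℕ) → _ := fun κ => B.rotSylvester (∑ i, (κ i : ℝ) * ρ i)
  have hL : ∀ κ ∈ (S.erase 0 : Set (Fin d → ℕ)), Function.Bijective (L κ) := by
    intro κ hκ
    have hκ0 : ((↑) ∘ κ : Fin d → ℤ) ≠ 0 := fun h =>
      (Finset.mem_erase.1 hκ).1 (funext fun i => by simpa using congrFun h i)
    exact Matrix.rotSylvester_bijective hB fun μ hμ ν hν => by
      simpa using (heig μ hμ ν hν _ hκ0).2
  refine (existsUnique_congr fun H => ?_).2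
    (existsUnique_pi_prod_of_bijective hL fun κ => (Rc κ, Rs κ))
  simp only [matTrigPoly_add_mul_sub_mul, matTrigPoly_eq_iff, Finset.mem_coe, Prod.ext_iff, L,
    Finset.forall_notMem_erase_iff]
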